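/- arXiv:2006.10006 — 2 statements merged into one kernel-verified Lean document; each statement's English description precedes it below -/
import Mathlib

section
/- For every K ≥ 3, every T ≥ 1, every σ > 0, every threshold τ ∈ ℝ, and every fixed-budget strategy π with budget T, there exists a K-armed bandit problem ν whose arm distributions are all Gaussian with variance σ² and whose mean sequence μ_1 ≤ μ_2 ≤ … ≤ μ_K is nondecreasing, such that the expected simple regret satisfies R̄_T^{ν,π} ≥ (1/8)·√( σ²·max(2, log K) / (8T) ). -/
open MeasureTheory Real

namespace TBP

/-- A `K`-armed bandit problem: a probability distribution on `ℝ` for each arm. -/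
structure Bandit (K : ℕ) where
  dist : Fin K → Measure ℝ
  prob : ∀ k, IsProbabilityMeasure (dist k)

/-- The mean of arm `k`. -/
noncomputable def Bandit.mean {K : ℕ} (ν : Bandit K) (k : Fin K) : ℝ := ∫ x, x ∂ ν.dist k

/-- The unstructured class `B`: all arm distributions are supported in `[0,1]`. -/
def Bandit.inB {K : ℕ} (ν : Bandit K) : Prop := ∀ k, ν.dist k (Set.Icc (0:ℝ) 1) = 1

/-- All arms are `σ²`-sub-Gaussian. -/
def Bandit.subG {K : ℕ} (σ : ℝ) (ν : Bandit K) : Prop :=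
  ∀ k, ∀ t : ℝ, ∫ x, Real.exp (t * (x - ν.mean k)) ∂ ν.dist k ≤ Real.exp (σ ^ 2 * t ^ 2 / 2)

/-- All arms are Gaussian with variance `σ²`. -/
def Bandit.isGaussian {K : ℕ} (σ : ℝ) (ν : Bandit K) : Prop :=
  ∃ m : Fin K → ℝ, ∀ k, ν.dist k = ProbabilityTheory.gaussianReal (m k) ⟨σ ^ 2, sq_nonneg σ⟩

/-- The monotone (nondecreasing means) shape constraint. -/
def Bandit.mono {K : ℕ} (ν : Bandit K) : Prop := Monotone ν.mean

/-- The unimodal shape constraint. -/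
def Bandit.unimodal {K : ℕ} (ν : Bandit K) : Prop :=
  ∃ kstar : Fin K, (∀ i j : Fin K, i ≤ j → j ≤ kstar → ν.mean i ≤ ν.mean j) ∧
    (∀ i j : Fin K, kstar ≤ i → i ≤ j → ν.mean j ≤ ν.mean i)

/-- The concave shape constraint: `μ_{k-1} + μ_{k+1} ≤ 2 μ_k` at interior indices. -/
def Bandit.concave {K : ℕ} (ν : Bandit K) : Prop :=
  ∀ k : ℕ, ∀ (h0 : 0 < k) (h1 : k + 1 < K),
    ν.mean ⟨k - 1, by omega⟩ + ν.mean ⟨k + 1, h1⟩ ≤ 2 * ν.mean ⟨k, by omega⟩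

/-- A fixed-budget strategy with budget `T` on `K` arms: a measurable sampling policy
(choosing the next arm from past observations) and a measurable final classification. -/
structure Strategy (K T : ℕ) where
  policy : (t : ℕ) → (Fin t → ℝ) → Fin K
  policy_meas : ∀ t, Measurable (policy t)
  decision : (Fin T → ℝ) → Fin K → Bool
  decision_meas : Measurable decision

/-- Law of the first `t` observations produced by playing `policy` on the bandit `ν`. -/
noncomputable def traj {K : ℕ} (ν : Bandit K) (policy : (t : ℕ) → (Fin t → ℝ) → Fin K) :
    (t : ℕ) → Measure (Fin t → ℝ)
  | 0 => Measure.dirac (fun i => Fin.elim0 i)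
  | (t + 1) => (traj ν policy t).bind
      (fun h => (ν.dist (policy t h)).map (fun y => Fin.snoc h y))

/-- The true classification of arm `k` (`true` iff `μ_k ≥ τ`). -/
noncomputable def trueQ {K : ℕ} (ν : Bandit K) (τ : ℝ) (k : Fin K) : Bool :=
  decide (τ ≤ ν.mean k)

/-- Simple regret of the classification `Qhat`: the largest gap `|τ - μ_k|` over misclassified
arms `k` (and `0` if there is none). -/
noncomputable def regret {K : ℕ} (ν : Bandit K) (τ : ℝ) (Qhat : Fin K → Bool) : ℝ :=
  ((Finset.univ.filter (fun k => Qhat k ≠ trueQ ν τ k)).sup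
    (fun k => Real.toNNReal |τ - ν.mean k|) : NNReal)

/-- Expected simple regret of the strategy `π` on the bandit problem `ν`. -/
noncomputable def expRegret {K T : ℕ} (ν : Bandit K) (alg : Strategy K T) (τ : ℝ) : ℝ :=
  ∫ h, regret ν τ (alg.decision h) ∂ (traj ν alg.policy T)

/-- Minimax expected simple regret over the class `C` of `K`-armed bandit problems. -/
noncomputable def minimax (K T : ℕ) (τ : ℝ) (C : Bandit K → Prop) : ℝ :=
  ⨅ alg : Strategy K T, ⨆ ν : {ν : Bandit K // C ν}, expRegret ν.1 alg τ


/-- Empirical mean of arm `k` under the Uniform strategy: averages the `⌊T/K⌋` samples of arm `k`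
(samples of arm `k` are taken at the times `t` with `⌊t/⌊T/K⌋⌋ = k`). -/
noncomputable def uniformEmp (K T : ℕ) (k : Fin K) (h : Fin T → ℝ) : ℝ :=
  (∑ t ∈ Finset.univ.filter (fun t : Fin T => (t : ℕ) / (T / K) = (k : ℕ)), h t) / (T / K : ℕ)

/-- The Uniform strategy: sample each arm `⌊T/K⌋` times and classify each arm by comparing its
sample mean to the threshold `τ`. -/
noncomputable def uniformStrategy (K T : ℕ) (hK : 0 < K) (τ : ℝ) : Strategy K T where
  policy := fun t _ => ⟨(t / (T / K)) % K, Nat.mod_lt _ hK⟩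
  policy_meas := fun _ => measurable_const
  decision := fun h k => decide (τ ≤ uniformEmp K T k h)
  decision_meas := by
    apply measurable_pi_lambda
    intro k
    have hm : Measurable (fun h : Fin T → ℝ => uniformEmp K T k h) := by
      unfold uniformEmp; fun_prop
    have hset : MeasurableSet {h : Fin T → ℝ | τ ≤ uniformEmp K T k h} :=
      measurableSet_le measurable_const hm
    have heq : (fun h : Fin T → ℝ => decide (τ ≤ uniformEmp K T k h))
        = fun h => if τ ≤ uniformEmp K T k h then true else false := by
      funext h
      by_cases hc : τ ≤ uniformEmp K T k h <;> simp [hc]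
    rw [heq]
    exact Measurable.ite hset measurable_const measurable_const

end TBP

/-!
Change of measure against a single reference problem. Let `ν₀` have all arms `N(τ, σ²)`, and
for each arm `i` let `νᵢ` have means `τ - A` on the arms `k < i` and `τ + A` on the arms `k ≥ i`,
with `A² = σ² max(2, log K) / (8T)`. Each `νᵢ` is monotone, every arm has gap `A`, and the
correct classifications of the `νᵢ` are pairwise distinct; hence some `i` is output with
probability at most `1/K` under `ν₀`. Whatever the adaptive policy, the likelihood ratio of the
`T` observations under `νᵢ` versus `ν₀` has second moment at most `exp(T A² / σ²)`, so by
Cauchy–Schwarz the probability of classifying `νᵢ` correctly is at most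
`√(exp(max(2, log K) / 8) / K) ≤ 7/8`, and the expected regret on `νᵢ` is at least `A / 8`.
-/

namespace TBP

open ProbabilityTheory
open scoped ENNReal NNReal

section Trajectory

variable {K : ℕ} (ν : Bandit K) {policy : (t : ℕ) → (Fin t → ℝ) → Fin K}

lemma measurable_snoc_prod {t : ℕ} :
    Measurable (fun p : (Fin t → ℝ) × ℝ => (Fin.snoc p.1 p.2 : Fin (t + 1) → ℝ)) := by
  refine measurable_pi_lambda _ fun i => Fin.lastCases ?_ (fun j => ?_) i
  · simpa only [Fin.snoc_last] using measurable_snd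
  · simp only [Fin.snoc_castSucc]
    fun_prop

lemma measurable_snoc {t : ℕ} (h : Fin t → ℝ) :
    Measurable (fun y : ℝ => (Fin.snoc h y : Fin (t + 1) → ℝ)) :=
  measurable_snoc_prod.comp measurable_prodMk_left

lemma measurable_init {t : ℕ} : Measurable (fun g : Fin (t + 1) → ℝ => Fin.init g) :=
  measurable_pi_lambda _ fun _ => measurable_pi_apply _

lemma traj_succ (t : ℕ) : traj ν policy (t + 1) =
    (traj ν policy t).bind fun h => (ν.dist (policy t h)).map (Fin.snoc (α := fun _ => ℝ) h) := rfl

lemma measurable_map_snoc_dist {t : ℕ} (hp : Measurable (policy t)) :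
    Measurable fun h : Fin t → ℝ => (ν.dist (policy t h)).map (Fin.snoc (α := fun _ => ℝ) h) := by
  have hk (k : Fin K) :
      Measurable fun h : Fin t → ℝ => (ν.dist k).map (Fin.snoc (α := fun _ => ℝ) h) := by
    have := ν.prob k
    have hmap : (fun h : Fin t → ℝ => (ν.dist k).map (Fin.snoc (α := fun _ => ℝ) h)) =
        fun h => ((ν.dist k).map (Prod.mk h)).map fun p => Fin.snoc p.1 p.2 := by
      funext h
      rw [Measure.map_map measurable_snoc_prod measurable_prodMk_left]
      rfl
    rw [hmap]
    exact (Measure.measurable_map _ measurable_snoc_prod).comp Measurable.map_prodMk_left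
  exact (measurable_from_prod_countable_left (f := fun p : (Fin t → ℝ) × Fin K =>
    (ν.dist p.2).map (Fin.snoc (α := fun _ => ℝ) p.1)) hk).comp (measurable_id.prodMk hp)

variable (hp : ∀ t, Measurable (policy t))
include hp

lemma lintegral_traj_succ (t : ℕ) {f : (Fin (t + 1) → ℝ) → ℝ≥0∞} (hf : Measurable f) :
    ∫⁻ g, f g ∂(traj ν policy (t + 1)) =
      ∫⁻ h, ∫⁻ y, f (Fin.snoc h y) ∂(ν.dist (policy t h)) ∂(traj ν policy t) := by
  rw [traj_succ, Measure.lintegral_bind (measurable_map_snoc_dist ν (hp t)).aemeasurable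
    hf.aemeasurable]
  exact lintegral_congr fun h => lintegral_map hf (measurable_snoc h)

lemma isProbabilityMeasure_traj (t : ℕ) : IsProbabilityMeasure (traj ν policy t) := by
  induction t with
  | zero => exact Measure.dirac.isProbabilityMeasure
  | succ t ih =>
    rw [traj_succ]
    refine isProbabilityMeasure_bind (measurable_map_snoc_dist ν (hp t)).aemeasurable
      (ae_of_all _ fun h => ?_)
    have := ν.prob (policy t h)
    exact Measure.isProbabilityMeasure_map (measurable_snoc h).aemeasurable

end Trajectory

section LikelihoodRatio

variable {K : ℕ} (r : Fin K → ℝ → ℝ≥0∞) (policy : (t : ℕ) → (Fin t → ℝ) → Fin K)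

noncomputable def likelihoodRatio : (t : ℕ) → (Fin t → ℝ) → ℝ≥0∞
  | 0, _ => 1
  | t + 1, g => likelihoodRatio t (Fin.init g) * r (policy t (Fin.init g)) (g (Fin.last t))

lemma likelihoodRatio_snoc (t : ℕ) (h : Fin t → ℝ) (y : ℝ) :
    likelihoodRatio r policy (t + 1) (Fin.snoc h y) =
      likelihoodRatio r policy t h * r (policy t h) y := by
  simp only [likelihoodRatio, Fin.init_snoc, Fin.snoc_last]

variable {r policy} (hr : ∀ k, Measurable (r k)) (hp : ∀ t, Measurable (policy t))
include hr hp

lemma measurable_likelihoodRatio (t : ℕ) : Measurable (likelihoodRatio r policy t) := by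
  induction t with
  | zero => exact measurable_const
  | succ t ih =>
    have hr' : Measurable fun p : ℝ × Fin K => r p.2 p.1 := measurable_from_prod_countable_left hr
    exact (ih.comp measurable_init).mul
      (hr'.comp (f := fun g : Fin (t + 1) → ℝ => (g (Fin.last t), policy t (Fin.init g)))
        ((measurable_pi_apply (Fin.last t)).prodMk ((hp t).comp measurable_init)))

lemma traj_eq_withDensity_likelihoodRatio (ν ν' : Bandit K)
    (hd : ∀ k, ν'.dist k = (ν.dist k).withDensity (r k)) (t : ℕ) :
    traj ν' policy t = (traj ν policy t).withDensity (likelihoodRatio r policy t) := by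
  induction t with
  | zero => exact (withDensity_one (μ := traj ν policy 0)).symm
  | succ t ih =>
    ext s hs
    have hk := measurable_map_snoc_dist ν' (hp t)
    have hks : Measurable fun h => (ν'.dist (policy t h)).map (Fin.snoc (α := fun _ => ℝ) h) s :=
      (Measure.measurable_coe hs).comp hk
    have inner (h : Fin t → ℝ) : (ν'.dist (policy t h)).map (Fin.snoc (α := fun _ => ℝ) h) s =
        ∫⁻ y, r (policy t h) y * s.indicator 1 (Fin.snoc h y) ∂ν.dist (policy t h) := by
      rw [Measure.map_apply (measurable_snoc h) hs, hd, withDensity_apply _ (measurable_snoc h hs),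
        ← lintegral_indicator (measurable_snoc h hs)]
      exact lintegral_congr fun y => by by_cases hy : Fin.snoc h y ∈ s <;> simp [hy]
    rw [traj_succ, Measure.bind_apply hs hk.aemeasurable, ih,
      lintegral_withDensity_eq_lintegral_mul _ (measurable_likelihoodRatio hr hp t) hks,
      withDensity_apply _ hs, ← lintegral_indicator hs,
      lintegral_traj_succ ν hp t ((measurable_likelihoodRatio hr hp (t + 1)).indicator hs)]
    refine lintegral_congr fun h => ?_
    have hm :
        Measurable fun y => r (policy t h) y * s.indicator 1 (Fin.snoc (α := fun _ => ℝ) h y) :=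
      (hr _).mul ((measurable_one.indicator hs).comp (measurable_snoc h))
    rw [Pi.mul_apply, inner, ← lintegral_const_mul _ hm]
    refine lintegral_congr fun y => ?_
    by_cases hy : Fin.snoc h y ∈ s <;> simp [hy, likelihoodRatio_snoc]

lemma lintegral_likelihoodRatio_sq_le (ν : Bandit K) {c : ℝ≥0∞}
    (hc : ∀ k, ∫⁻ y, r k y ^ 2 ∂ν.dist k ≤ c) (t : ℕ) :
    ∫⁻ h, likelihoodRatio r policy t h ^ 2 ∂traj ν policy t ≤ c ^ t := by
  induction t with
  | zero => simp [traj, likelihoodRatio]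
  | succ t ih =>
    have hZ := measurable_likelihoodRatio hr hp t
    calc ∫⁻ g, likelihoodRatio r policy (t + 1) g ^ 2 ∂traj ν policy (t + 1)
        = ∫⁻ h, likelihoodRatio r policy t h ^ 2 * ∫⁻ y, r (policy t h) y ^ 2 ∂ν.dist (policy t h)
            ∂traj ν policy t := by
          rw [lintegral_traj_succ ν hp t ((measurable_likelihoodRatio hr hp (t + 1)).pow_const 2)]
          refine lintegral_congr fun h => ?_
          simp only [likelihoodRatio_snoc, mul_pow]
          exact lintegral_const_mul _ ((hr _).pow_const 2)
      _ ≤ ∫⁻ h, likelihoodRatio r policy t h ^ 2 * c ∂traj ν policy t :=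
          lintegral_mono fun h => by gcongr; exact hc _
      _ = (∫⁻ h, likelihoodRatio r policy t h ^ 2 ∂traj ν policy t) * c :=
          lintegral_mul_const _ (hZ.pow_const 2)
      _ ≤ c ^ (t + 1) := by rw [pow_succ]; gcongr

end LikelihoodRatio

lemma withDensity_apply_sq_le {α : Type*} [MeasurableSpace α] (μ : Measure α) {f : α → ℝ≥0∞}
    (hf : AEMeasurable f μ) {s : Set α} (hs : MeasurableSet s) :
    μ.withDensity f s ^ 2 ≤ (∫⁻ x, f x ^ 2 ∂μ) * μ s := by
  have hCS := ENNReal.lintegral_mul_le_Lp_mul_Lq (μ.restrict s) .two_two hf.restrict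
    (aemeasurable_const (b := (1 : ℝ≥0∞)))
  have hsq (x : ℝ≥0∞) : (x ^ (1 / 2 : ℝ)) ^ 2 = x := by
    rw [← ENNReal.rpow_natCast, ← ENNReal.rpow_mul]; norm_num
  simp only [Pi.mul_apply, mul_one, one_pow, one_mul, lintegral_const,
    Measure.restrict_apply_univ, ENNReal.rpow_two] at hCS
  calc μ.withDensity f s ^ 2
      ≤ ((∫⁻ x in s, f x ^ 2 ∂μ) ^ (1 / 2 : ℝ) * μ s ^ (1 / 2 : ℝ)) ^ 2 := by
        rw [withDensity_apply _ hs]; gcongr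
    _ = (∫⁻ x in s, f x ^ 2 ∂μ) * μ s := by rw [mul_pow, hsq, hsq]
    _ ≤ (∫⁻ x, f x ^ 2 ∂μ) * μ s := by gcongr; exact Measure.restrict_le_self

lemma exists_measureReal_preimage_singleton_le {α β ι : Type*} [MeasurableSpace α]
    [MeasurableSpace β] [MeasurableSingletonClass β] [Fintype ι] [Nonempty ι]
    (μ : Measure α) [IsProbabilityMeasure μ] {f : α → β} (hf : Measurable f) {g : ι → β}
    (hg : Function.Injective g) : ∃ i, μ.real (f ⁻¹' {g i}) ≤ (Fintype.card ι : ℝ)⁻¹ := by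
  have hdisj : Pairwise (Function.onFun Disjoint fun i => f ⁻¹' {g i}) := fun i j hij =>
    (Set.disjoint_singleton.mpr (hg.ne hij)).preimage f
  have hsum : ∑ i, μ.real (f ⁻¹' {g i}) ≤ ∑ _i : ι, (Fintype.card ι : ℝ)⁻¹ := by
    rw [← measureReal_iUnion_fintype hdisj fun i => hf (measurableSet_singleton _),
      Finset.sum_const, Finset.card_univ, nsmul_eq_mul,
      mul_inv_cancel₀ (Nat.cast_ne_zero.mpr Fintype.card_ne_zero)]
    exact measureReal_le_one
  obtain ⟨i, -, hi⟩ := Finset.exists_le_of_sum_le Finset.univ_nonempty hsum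
  exact ⟨i, hi⟩

section Gaussian

variable {v : ℝ≥0}

noncomputable def gaussianRatio (v : ℝ≥0) (μ₀ μ₁ y : ℝ) : ℝ≥0∞ :=
  ENNReal.ofReal (exp (((y - μ₀) ^ 2 - (y - μ₁) ^ 2) / (2 * v)))

lemma measurable_gaussianRatio (v : ℝ≥0) (μ₀ μ₁ : ℝ) : Measurable (gaussianRatio v μ₀ μ₁) :=
  Measurable.ennreal_ofReal (by fun_prop)

lemma gaussianPDF_mul_gaussianRatio (μ₀ μ₁ y : ℝ) :
    gaussianPDF μ₀ v y * gaussianRatio v μ₀ μ₁ y = gaussianPDF μ₁ v y := by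
  rw [gaussianPDF, gaussianPDF, gaussianRatio, ← ENNReal.ofReal_mul (gaussianPDFReal_nonneg _ _ _),
    gaussianPDFReal, gaussianPDFReal, mul_assoc, ← exp_add]
  ring_nf

lemma gaussianPDF_mul_gaussianRatio_sq (μ₀ μ₁ y : ℝ) :
    gaussianPDF μ₀ v y * gaussianRatio v μ₀ μ₁ y ^ 2 =
      ENNReal.ofReal (exp ((μ₁ - μ₀) ^ 2 / v)) * gaussianPDF (2 * μ₁ - μ₀) v y := by
  rw [gaussianPDF, gaussianPDF, gaussianRatio, ← ENNReal.ofReal_pow (exp_pos _).le,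
    ← ENNReal.ofReal_mul (gaussianPDFReal_nonneg _ _ _), ← ENNReal.ofReal_mul (exp_pos _).le,
    gaussianPDFReal, gaussianPDFReal, mul_left_comm, mul_assoc, ← exp_nat_mul, ← exp_add,
    ← exp_add]
  ring_nf

lemma gaussianReal_withDensity_gaussianRatio (hv : v ≠ 0) (μ₀ μ₁ : ℝ) :
    (gaussianReal μ₀ v).withDensity (gaussianRatio v μ₀ μ₁) = gaussianReal μ₁ v := by
  rw [gaussianReal_of_var_ne_zero _ hv, gaussianReal_of_var_ne_zero _ hv,
    ← withDensity_mul _ (measurable_gaussianPDF _ _) (measurable_gaussianRatio _ _ _)]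
  exact congrArg _ (funext (gaussianPDF_mul_gaussianRatio μ₀ μ₁))

lemma lintegral_gaussianRatio_sq (hv : v ≠ 0) (μ₀ μ₁ : ℝ) :
    ∫⁻ y, gaussianRatio v μ₀ μ₁ y ^ 2 ∂gaussianReal μ₀ v =
      ENNReal.ofReal (exp ((μ₁ - μ₀) ^ 2 / v)) := by
  rw [gaussianReal_of_var_ne_zero _ hv, lintegral_withDensity_eq_lintegral_mul _
    (measurable_gaussianPDF _ _) ((measurable_gaussianRatio v μ₀ μ₁).pow_const 2)]
  simp only [Pi.mul_apply, gaussianPDF_mul_gaussianRatio_sq]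
  rw [lintegral_const_mul _ (measurable_gaussianPDF _ _), lintegral_gaussianPDF_eq_one _ hv,
    mul_one]

end Gaussian

section Bandits

variable {K : ℕ}

noncomputable def gaussianBandit (v : ℝ≥0) (m : Fin K → ℝ) : Bandit K :=
  ⟨fun k => gaussianReal (m k) v, fun _ => inferInstance⟩

lemma gaussianBandit_mean (v : ℝ≥0) (m : Fin K → ℝ) : (gaussianBandit v m).mean = m :=
  funext fun _ => integral_id_gaussianReal

lemma measureReal_traj_gaussianBandit_sq_le {v : ℝ≥0} (hv : v ≠ 0)
    {policy : (t : ℕ) → (Fin t → ℝ) → Fin K} (hp : ∀ t, Measurable (policy t))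
    {m₀ m₁ : Fin K → ℝ} {d : ℝ} (hd : ∀ k, (m₁ k - m₀ k) ^ 2 ≤ d) (T : ℕ)
    {s : Set (Fin T → ℝ)} (hs : MeasurableSet s) :
    (traj (gaussianBandit v m₁) policy T).real s ^ 2 ≤
      exp (T * d / v) * (traj (gaussianBandit v m₀) policy T).real s := by
  set r := fun k => gaussianRatio v (m₀ k) (m₁ k)
  have hr (k : Fin K) : Measurable (r k) := measurable_gaussianRatio _ _ _
  have hc (k : Fin K) :
      ∫⁻ y, r k y ^ 2 ∂(gaussianBandit v m₀).dist k ≤ ENNReal.ofReal (exp (d / v)) := by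
    rw [gaussianBandit, lintegral_gaussianRatio_sq hv]
    gcongr
    exact hd k
  have := isProbabilityMeasure_traj (gaussianBandit v m₀) hp T
  have hsq : traj (gaussianBandit v m₁) policy T s ^ 2 ≤
      ENNReal.ofReal (exp (T * d / v)) * traj (gaussianBandit v m₀) policy T s := by
    rw [traj_eq_withDensity_likelihoodRatio hr hp (gaussianBandit v m₀) (gaussianBandit v m₁)
      (fun k => (gaussianReal_withDensity_gaussianRatio hv _ _).symm) T]
    refine (withDensity_apply_sq_le _ (measurable_likelihoodRatio hr hp T).aemeasurable hs).trans ?_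
    gcongr
    refine (lintegral_likelihoodRatio_sq_le hr hp _ hc T).trans_eq ?_
    rw [← ENNReal.ofReal_pow (exp_pos _).le, ← exp_nat_mul, mul_div_assoc]
  have := ENNReal.toReal_mono (by finiteness) hsq
  rwa [ENNReal.toReal_pow, ENNReal.toReal_mul, ENNReal.toReal_ofReal (exp_pos _).le] at this

variable {τ A : ℝ}

lemma regret_eq_of_abs_sub_mean_eq {ν : Bandit K} (hA : 0 ≤ A) (hgap : ∀ k, |τ - ν.mean k| = A)
    (Q : Fin K → Bool) : regret ν τ Q = if Q = trueQ ν τ then 0 else A := by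
  split_ifs with hQ
  · simp [regret, hQ]
  · obtain ⟨k, hk⟩ := Function.ne_iff.mp hQ
    have hne : (Finset.univ.filter fun k => Q k ≠ trueQ ν τ k).Nonempty := ⟨k, by simpa using hk⟩
    rw [regret, Finset.sup_congr rfl fun k _ => by rw [hgap k], Finset.sup_const hne,
      Real.coe_toNNReal A hA]

lemma expRegret_eq_of_abs_sub_mean_eq {T : ℕ} {ν : Bandit K} (alg : Strategy K T) (hA : 0 ≤ A)
    (hgap : ∀ k, |τ - ν.mean k| = A) :
    expRegret ν alg τ = A * (traj ν alg.policy T).real (alg.decision ⁻¹' {trueQ ν τ})ᶜ := by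
  have hreg : (fun h => regret ν τ (alg.decision h)) =
      (alg.decision ⁻¹' {trueQ ν τ})ᶜ.indicator fun _ => A := by
    funext h
    by_cases hh : alg.decision h = trueQ ν τ <;>
      simp [regret_eq_of_abs_sub_mean_eq hA hgap, hh]
  rw [expRegret, hreg,
    integral_indicator_const _ (alg.decision_meas (measurableSet_singleton _)).compl, smul_eq_mul,
    mul_comm]

def stepMean (τ A : ℝ) (i k : Fin K) : ℝ := if i ≤ k then τ + A else τ - A

lemma stepMean_monotone (hA : 0 ≤ A) (i : Fin K) : Monotone (stepMean τ A i) := by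
  intro k l hkl
  unfold stepMean
  split_ifs with hk hl hl <;> first | linarith | exact absurd (hk.trans hkl) hl

lemma abs_sub_stepMean (hA : 0 ≤ A) (i k : Fin K) : |τ - stepMean τ A i k| = A := by
  unfold stepMean
  split_ifs <;> simp [abs_of_nonneg hA]

lemma sq_stepMean_sub (i k : Fin K) : (stepMean τ A i k - τ) ^ 2 = A ^ 2 := by
  unfold stepMean
  split_ifs <;> ring

lemma le_stepMean_iff (hA : 0 < A) (i k : Fin K) : τ ≤ stepMean τ A i k ↔ i ≤ k := by
  unfold stepMean
  split_ifs with h <;> simp [h, hA, hA.le]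

lemma injective_trueQ_gaussianBandit_stepMean (v : ℝ≥0) (hA : 0 < A) :
    Function.Injective fun i : Fin K => trueQ (gaussianBandit v (stepMean τ A i)) τ := by
  intro i j hij
  have h (k : Fin K) : i ≤ k ↔ j ≤ k := by
    simpa [trueQ, gaussianBandit_mean, le_stepMean_iff hA] using congrFun hij k
  exact le_antisymm ((h j).mpr le_rfl) ((h i).mp le_rfl)

lemma le_expRegret_gaussianBandit_stepMean {T : ℕ} (alg : Strategy K T) {v : ℝ≥0} (hv : v ≠ 0)
    (hA : 0 < A) (i : Fin K) {q : ℝ} (hq : 0 ≤ q)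
    (hbase : exp (T * A ^ 2 / v) * (traj (gaussianBandit v fun _ => τ) alg.policy T).real
      (alg.decision ⁻¹' {trueQ (gaussianBandit v (stepMean τ A i)) τ}) ≤ q ^ 2) :
    (1 - q) * A ≤ expRegret (gaussianBandit v (stepMean τ A i)) alg τ := by
  set ν := gaussianBandit v (stepMean τ A i)
  have := isProbabilityMeasure_traj ν alg.policy_meas T
  have hcorrect := alg.decision_meas (measurableSet_singleton (trueQ ν τ))
  have hchange := measureReal_traj_gaussianBandit_sq_le hv alg.policy_meas (m₀ := fun _ => τ)
    (fun k => (sq_stepMean_sub (A := A) i k).le) T hcorrect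
  have hsmall : (traj ν alg.policy T).real (alg.decision ⁻¹' {trueQ ν τ}) ≤ q :=
    (pow_le_pow_iff_left₀ measureReal_nonneg hq two_ne_zero).mp (hchange.trans hbase)
  have hgap (k : Fin K) : |τ - ν.mean k| = A := by
    rw [gaussianBandit_mean]
    exact abs_sub_stepMean hA.le i k
  rw [expRegret_eq_of_abs_sub_mean_eq alg hA.le hgap, measureReal_compl hcorrect, probReal_univ,
    mul_comm]
  gcongr

end Bandits

lemma exp_max_two_log_div_eight_div_le {K : ℕ} (hK : 3 ≤ K) : exp (max 2 (log K) / 8) / K ≤ 49 / 64 := by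
  have hK0 : (0 : ℝ) < K := by positivity
  have hlog : 1 ≤ log K := by
    rw [le_log_iff_exp_le hK0]
    have : (3 : ℝ) ≤ K := by exact_mod_cast hK
    linarith [exp_one_lt_d9]
  have hexp : exp (-(1 / 2)) ≤ 2 / 3 := by
    rw [exp_neg, inv_le_comm₀ (exp_pos _) (by norm_num)]
    linarith [add_one_le_exp (1 / 2 : ℝ)]
  calc exp (max 2 (log K) / 8) / K = exp (max 2 (log K) / 8 - log K) := by
        rw [exp_sub, exp_log hK0]
    _ ≤ exp (-(1 / 2)) := by
        gcongr
        rcases max_cases 2 (log K) with ⟨h, -⟩ | ⟨h, -⟩ <;> rw [h] <;> linarith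
    _ ≤ 49 / 64 := by linarith

end TBP

open TBP in
/-- Minimax lower bound for the monotone thresholding bandit problem. -/
theorem monotone_lower_bound (K T : ℕ) (σ τ : ℝ) (hK : 3 ≤ K) (hT : 1 ≤ T) (hσ : 0 < σ)
    (alg : Strategy K T) :
    ∃ ν : Bandit K, ν.isGaussian σ ∧ ν.mono ∧
      1 / 8 * Real.sqrt (σ ^ 2 * max 2 (Real.log K) / (8 * T)) ≤ expRegret ν alg τ := by
  set L := max 2 (log K)
  set A := √(σ ^ 2 * L / (8 * T))
  have hA : 0 < A := sqrt_pos.mpr (by positivity)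
  set v : NNReal := ⟨σ ^ 2, sq_nonneg σ⟩
  have hv : v ≠ 0 := (NNReal.coe_pos (r := v) |>.mp (pow_pos hσ 2)).ne'
  have hexp : T * A ^ 2 / v = L / 8 := by
    have hT0 : (T : ℝ) ≠ 0 := by positivity
    rw [sq_sqrt (by positivity), show (v : ℝ) = σ ^ 2 from rfl]
    field_simp
  have : NeZero K := ⟨by omega⟩
  have := isProbabilityMeasure_traj (gaussianBandit v fun _ => τ) alg.policy_meas T
  obtain ⟨i, hi⟩ := exists_measureReal_preimage_singleton_le
    (traj (gaussianBandit v fun _ => τ) alg.policy T) alg.decision_meas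
    (injective_trueQ_gaussianBandit_stepMean v hA)
  rw [Fintype.card_fin] at hi
  have hregret := le_expRegret_gaussianBandit_stepMean alg hv hA i (q := 7 / 8) (by norm_num) <| by
    rw [hexp]
    calc _ ≤ exp (L / 8) * (K : ℝ)⁻¹ := by gcongr
      _ ≤ (7 / 8) ^ 2 := by rw [← div_eq_mul_inv]; linarith [exp_max_two_log_div_eight_div_le hK]
  refine ⟨gaussianBandit v (stepMean τ A i), ⟨_, fun _ => rfl⟩, ?_, by linarith⟩
  rw [Bandit.mono, gaussianBandit_mean]
  exact stepMean_monotone hA.le i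
end

section
/- Let K ≥ 3 and let (μ_k)_{k=1,…,K} be a concave sequence of reals (μ_{k−1} + μ_{k+1} ≤ 2μ_k at all interior k). Let 1 ≤ p ≤ q ≤ K, ε̃ > 0 and τ̃ ∈ ℝ, and suppose μ_{⌊(p+q)/2⌋} ≥ τ̃ + ε̃/8. Then the sequence k ↦ min(|μ_k − τ̃|, ε̃/8)·sign(μ_k − τ̃) is nondecreasing for k ∈ {p, …, ⌊(p+q)/2⌋} and nonincreasing for k ∈ {⌊(p+q)/2⌋, …, q}. -/
/-- `sign(x)`: `1` for `x ≥ 0` and `-1` for `x < 0`. -/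
noncomputable def sgn (x : ℝ) : ℝ := if 0 ≤ x then 1 else -1

lemma sgn_clamp (x τ ε : ℝ) (hε : 0 < ε) :
    min |x - τ| (ε / 8) * sgn (x - τ) = max (-(ε / 8)) (min (x - τ) (ε / 8)) := by
  unfold sgn
  rcases le_or_gt 0 (x - τ) with h | h
  · rw [if_pos h, abs_of_nonneg h, mul_one, max_eq_right]
    exact le_min (by linarith) (by linarith)
  · rw [if_neg (not_le.2 h), abs_of_neg h, mul_neg_one,
      min_eq_left (by linarith : x - τ ≤ ε / 8)]
    rcases le_total (x - τ) (-(ε / 8)) with h2 | h2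
    · rw [min_eq_right (by linarith : ε / 8 ≤ -(x - τ)), max_eq_left h2]
    · rw [min_eq_left (by linarith : -(x - τ) ≤ ε / 8), max_eq_right h2, neg_neg]

lemma clamp_mono (τ ε : ℝ) : Monotone (fun x : ℝ => max (-(ε / 8)) (min (x - τ) (ε / 8))) := by
  intro a b hab
  exact max_le_max le_rfl (min_le_min (by linarith) le_rfl)

lemma clamp_le (x τ ε : ℝ) (hε : 0 < ε) : max (-(ε / 8)) (min (x - τ) (ε / 8)) ≤ ε / 8 :=
  max_le (by linarith) (min_le_right _ _)

section concave
variable (K : ℕ) (μ : ℕ → ℝ)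
  (hconc : ∀ k : ℕ, 1 < k → k < K → μ (k - 1) + μ (k + 1) ≤ 2 * μ k)

include hconc in
lemma step_mono : ∀ j m : ℕ, 1 ≤ j → j ≤ m → m < K → μ (m + 1) - μ m ≤ μ (j + 1) - μ j := by
  intro j m hj hjm hm
  induction m with
  | zero => omega
  | succ n ih =>
    rcases Nat.lt_or_ge j (n + 1) with hlt | hge
    · have hconc' := hconc (n + 1) (by omega) hm
      simp only [Nat.add_sub_cancel] at hconc'
      have := ih (by omega) (by omega)
      linarith
    · have : j = n + 1 := by omega
      subst this; rfl

include hconc in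
lemma min_le_inner : ∀ a k b : ℕ, 1 ≤ a → a ≤ k → k ≤ b → b ≤ K →
    min (μ a) (μ b) ≤ μ k := by
  intro a k b ha hak hkb hb
  -- claim A
  have A : ∀ k : ℕ, a ≤ k → (μ a ≤ μ k ∨ ∃ j, 1 ≤ j ∧ a ≤ j ∧ j < k ∧ μ (j + 1) < μ j) := by
    intro k hk
    induction k with
    | zero =>
      left
      have : a = 0 := by omega
      simp [this]
    | succ n ih =>
      rcases Nat.lt_or_ge a (n + 1) with hlt | hge
      · rcases ih (by omega) with h | ⟨j, hj1, hj2, hj3, hj4⟩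
        · rcases le_or_gt (μ n) (μ (n + 1)) with h2 | h2
          · left; linarith
          · right; exact ⟨n, by omega, by omega, by omega, h2⟩
        · right; exact ⟨j, hj1, hj2, by omega, hj4⟩
      · left
        have : a = n + 1 := by omega
        simp [this]
  rcases A k hak with h | ⟨j, hj1, hj2, hj3, hj4⟩
  · exact le_trans (min_le_left _ _) h
  · -- claim B: μ b ≤ μ k
    refine le_trans (min_le_right _ _) ?_
    have B : ∀ m : ℕ, k ≤ m → m ≤ b → μ m ≤ μ k := by
      intro m hm hmb
      induction m with
      | zero =>
        have : k = 0 := by omega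
        simp [this]
      | succ n ih =>
        rcases Nat.lt_or_ge k (n + 1) with hlt | hge
        · have hstep : μ (n + 1) - μ n ≤ μ (j + 1) - μ j :=
            step_mono K μ hconc j n hj1 (by omega) (by omega)
          have := ih (by omega) (by omega)
          linarith
        · have : k = n + 1 := by omega
          simp [this]
    exact B b hkb le_rfl

end concave

/-- Lemma: if a concave sequence exceeds `τ̃ + ε̃/8` at the midpoint `⌊(p+q)/2⌋`, then the
truncated-signed-gap sequence `k ↦ min(|μ_k − τ̃|, ε̃/8)·sign(μ_k − τ̃)` is nondecreasing on
`{p, …, ⌊(p+q)/2⌋}` and nonincreasing on `{⌊(p+q)/2⌋, …, q}`. -/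
theorem concave_truncated_gap_monotone (K : ℕ) (hK : 3 ≤ K) (μ : ℕ → ℝ)
    (hconc : ∀ k : ℕ, 1 < k → k < K → μ (k - 1) + μ (k + 1) ≤ 2 * μ k)
    (p q : ℕ) (hp : 1 ≤ p) (hpq : p ≤ q) (hq : q ≤ K)
    (ε τ : ℝ) (hε : 0 < ε)
    (hmid : τ + ε / 8 ≤ μ ((p + q) / 2)) :
    (∀ i j : ℕ, p ≤ i → i ≤ j → j ≤ (p + q) / 2 →
        min |μ i - τ| (ε / 8) * sgn (μ i - τ) ≤ min |μ j - τ| (ε / 8) * sgn (μ j - τ)) ∧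
    (∀ i j : ℕ, (p + q) / 2 ≤ i → i ≤ j → j ≤ q →
        min |μ j - τ| (ε / 8) * sgn (μ j - τ) ≤ min |μ i - τ| (ε / 8) * sgn (μ i - τ)) := by
  set mid := (p + q) / 2 with hmiddef
  have hpmid : p ≤ mid := by omega
  have hmidq : mid ≤ q := by omega
  have hgmid : max (-(ε / 8)) (min (μ mid - τ) (ε / 8)) = ε / 8 := by
    rw [min_eq_right (by linarith), max_eq_right (by linarith)]
  constructor
  · intro i j hi hij hj
    rw [sgn_clamp _ _ _ hε, sgn_clamp _ _ _ hε]
    have hmin : min (μ i) (μ mid) ≤ μ j :=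
      min_le_inner K μ hconc i j mid (by omega) hij hj (by omega)
    rcases le_total (μ i) (μ mid) with h | h
    · exact clamp_mono τ ε (le_trans (min_eq_left h ▸ hmin) le_rfl)
    · have : μ mid ≤ μ j := min_eq_right h ▸ hmin
      calc max (-(ε / 8)) (min (μ i - τ) (ε / 8)) ≤ ε / 8 := clamp_le _ _ _ hε
        _ = max (-(ε / 8)) (min (μ mid - τ) (ε / 8)) := hgmid.symm
        _ ≤ _ := clamp_mono τ ε this
  · intro i j hi hij hj
    rw [sgn_clamp _ _ _ hε, sgn_clamp _ _ _ hε]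
    have hmin : min (μ mid) (μ j) ≤ μ i :=
      min_le_inner K μ hconc mid i j (by omega) hi hij (by omega)
    rcases le_total (μ mid) (μ j) with h | h
    · have : μ mid ≤ μ i := min_eq_left h ▸ hmin
      calc max (-(ε / 8)) (min (μ j - τ) (ε / 8)) ≤ ε / 8 := clamp_le _ _ _ hε
        _ = max (-(ε / 8)) (min (μ mid - τ) (ε / 8)) := hgmid.symm
        _ ≤ _ := clamp_mono τ ε this
    · exact clamp_mono τ ε (min_eq_right h ▸ hmin)
end
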